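/- (Strong duality for the constrained L1-penalized QP under Slater's condition.) Let ŷ ∈ ℝ^d, let V ∈ ℝ^{d×d} be symmetric positive definite, let E ∈ ℝ^{k×d}, γ ≥ 0, A ∈ ℝ^{p×d}, b ∈ ℝ^p, G ∈ ℝ^{q×d}, h ∈ ℝ^q, and suppose there exists z₀ ∈ ℝ^d with Az₀ = b and Gz₀ < h componentwise (strict inequality in every coordinate). Then the infimum of the primal objective −ŷᵀz + ½ zᵀVz + γ‖Ez‖₁ over the feasible set {z ∈ ℝ^d : Az = b, Gz ≤ h} equals the negative of the infimum of the dual objective ½ rᵀV⁻¹r + ηᵀb + λᵀh, where r = ŷ − Eᵀv − Aᵀη − Gᵀλ, taken over all (v, η, λ) ∈ ℝ^k × ℝ^p × ℝ^q with maxᵢ|vᵢ| ≤ γ and λ ≥ 0 componentwise; moreover both infima are attained. -/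

import Mathlib

/-!
The dual is solved directly, with no separation argument. In the variables `(v, s, λ)`, where
`s = Aᵀη` and `ηᵀb = sᵀz₀` for the Slater point `z₀`, the dual objective is continuous on a
closed convex set, and its sublevel sets are bounded: the strict slack `h - Gz₀ > 0` bounds `λ`
and positive definiteness bounds the residual `r`. At a minimiser the first-order conditions,
read off one block of coordinates at a time, say that `z = V⁻¹r` is primal feasible and
complementary to `(v, η, λ)`. The identity
`primal z + dual (v, η, λ) = ½ (r - Vz)ᵀV⁻¹(r - Vz) + (γ‖Ez‖₁ - vᵀEz) + ηᵀ(b - Az) + λᵀ(h - Gz)`,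
whose terms are nonnegative for feasible pairs, then gives weak duality and a zero gap at this
pair.
-/

open Matrix Set Filter Topology

theorem Matrix.PosDef.transpose_eq_self {n : Type*} {W : Matrix n n ℝ} (hW : W.PosDef) :
    Wᵀ = W := by
  simpa using hW.isHermitian.eq

theorem Matrix.transpose_mulVec_dotProduct {m n : Type*} [Fintype m] [Fintype n]
    (M : Matrix m n ℝ) (u : m → ℝ) (z : n → ℝ) : (Mᵀ *ᵥ u) ⬝ᵥ z = u ⬝ᵥ M *ᵥ z := by
  rw [dotProduct_comm, dotProduct_transpose_mulVec]

section QuadraticForm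

variable {n : Type*} [Fintype n]

theorem Matrix.PosDef.dotProduct_mulVec_self_nonneg {W : Matrix n n ℝ} (hW : W.PosDef)
    (u : n → ℝ) : 0 ≤ u ⬝ᵥ W *ᵥ u := by
  simpa using hW.posSemidef.dotProduct_mulVec_nonneg u

theorem Matrix.PosDef.exists_pos_mul_sq_norm_le {W : Matrix n n ℝ} (hW : W.PosDef) :
    ∃ m > 0, ∀ u : n → ℝ, m * ‖u‖ ^ 2 ≤ u ⬝ᵥ W *ᵥ u := by
  rcases isEmpty_or_nonempty n with hn | hn
  · exact ⟨1, one_pos, fun u => by simp [Subsingleton.elim u 0]⟩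
  obtain ⟨u₀, hu₀, hmin⟩ := (isCompact_sphere (0 : n → ℝ) 1).exists_isMinOn
    (NormedSpace.sphere_nonempty.mpr zero_le_one)
    (Continuous.continuousOn (f := fun u : n → ℝ => u ⬝ᵥ W *ᵥ u) (by fun_prop))
  have hu₀0 : u₀ ≠ 0 := ne_zero_of_mem_unit_sphere ⟨u₀, hu₀⟩
  refine ⟨_, by simpa using hW.dotProduct_mulVec_pos hu₀0, fun u => ?_⟩
  rcases eq_or_ne u 0 with rfl | hu
  · simp
  have hpos : 0 < ‖u‖ := norm_pos_iff.mpr hu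
  have hle := isMinOn_iff.mp hmin _ (show ‖u‖⁻¹ • u ∈ Metric.sphere (0 : n → ℝ) 1 by
    simp [norm_smul, hpos.ne'])
  simp only [mulVec_smul, smul_dotProduct, dotProduct_smul, smul_eq_mul] at hle
  calc u₀ ⬝ᵥ W *ᵥ u₀ * ‖u‖ ^ 2 ≤ ‖u‖⁻¹ * (‖u‖⁻¹ * (u ⬝ᵥ W *ᵥ u)) * ‖u‖ ^ 2 := by gcongr
    _ = u ⬝ᵥ W *ᵥ u := by field_simp

theorem dotProduct_mulVec_sub_smul {W : Matrix n n ℝ} (hW : Wᵀ = W) (u δ : n → ℝ) (t : ℝ) :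
    (u - t • δ) ⬝ᵥ W *ᵥ (u - t • δ) =
      u ⬝ᵥ W *ᵥ u - 2 * t * (δ ⬝ᵥ W *ᵥ u) + t ^ 2 * (δ ⬝ᵥ W *ᵥ δ) := by
  have hsymm : u ⬝ᵥ W *ᵥ δ = δ ⬝ᵥ W *ᵥ u := by
    rw [← dotProduct_transpose_mulVec, hW]
  simp only [mulVec_sub, mulVec_smul, sub_dotProduct, dotProduct_sub, smul_dotProduct,
    dotProduct_smul, smul_eq_mul, hsymm]
  ring

variable [DecidableEq n]

theorem Matrix.PosDef.fenchelYoung_gap_eq {V : Matrix n n ℝ} (hV : V.PosDef) (z r : n → ℝ) :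
    (1 / 2) * (z ⬝ᵥ V *ᵥ z) + (1 / 2) * (r ⬝ᵥ V⁻¹ *ᵥ r) - r ⬝ᵥ z =
      (1 / 2) * ((r - V *ᵥ z) ⬝ᵥ V⁻¹ *ᵥ (r - V *ᵥ z)) := by
  have hVinv : V⁻¹ * V = 1 := nonsing_inv_mul V ((isUnit_iff_isUnit_det V).mp hV.isUnit)
  have hcross : (V *ᵥ z) ⬝ᵥ V⁻¹ *ᵥ r = r ⬝ᵥ z := by
    rw [← dotProduct_transpose_mulVec, hV.inv.transpose_eq_self, mulVec_mulVec, hVinv,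
      one_mulVec]
  have hsq : (V *ᵥ z) ⬝ᵥ V⁻¹ *ᵥ (V *ᵥ z) = z ⬝ᵥ V *ᵥ z := by
    rw [mulVec_mulVec, hVinv, one_mulVec, dotProduct_comm]
  rw [mulVec_sub, dotProduct_sub, sub_dotProduct, sub_dotProduct, hcross, hsq,
    mulVec_mulVec, hVinv, one_mulVec]
  ring

end QuadraticForm

theorem setOf_forall_abs_le_eq_Icc {k : Type*} (γ : ℝ) :
    {v : k → ℝ | ∀ i, |v i| ≤ γ} = Icc (fun _ => -γ) (fun _ => γ) := by
  ext v; simp [abs_le, Pi.le_def, forall_and]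


section Box

variable {k : Type*} [Fintype k]

theorem dotProduct_le_mul_sum_abs {v : k → ℝ} {γ : ℝ} (hv : ∀ i, |v i| ≤ γ) (w : k → ℝ) :
    v ⬝ᵥ w ≤ γ * ∑ i, |w i| := by
  rw [Finset.mul_sum]
  refine Finset.sum_le_sum fun i _ => ?_
  calc v i * w i ≤ |v i| * |w i| := by rw [← abs_mul]; exact le_abs_self _
    _ ≤ γ * |w i| := by gcongr; exact hv i

theorem dotProduct_eq_mul_sum_abs_of_forall_le {v w : k → ℝ} {γ : ℝ} (hγ : 0 ≤ γ)
    (hv : ∀ i, |v i| ≤ γ) (hmax : ∀ v' : k → ℝ, (∀ i, |v' i| ≤ γ) → v' ⬝ᵥ w ≤ v ⬝ᵥ w) :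
    v ⬝ᵥ w = γ * ∑ i, |w i| := by
  set sgn : k → ℝ := fun i => if 0 ≤ w i then γ else -γ
  have hsgn : ∀ i, |sgn i| ≤ γ := fun i => by
    simp only [sgn]; split_ifs <;> simp [abs_of_nonneg hγ]
  have hsgn_dot : sgn ⬝ᵥ w = γ * ∑ i, |w i| := by
    rw [Finset.mul_sum]
    refine Finset.sum_congr rfl fun i _ => ?_
    simp only [sgn]
    split_ifs with hi
    · rw [abs_of_nonneg hi]
    · rw [abs_of_neg (not_le.mp hi)]; ring
  exact le_antisymm (dotProduct_le_mul_sum_abs hv w) (hsgn_dot ▸ hmax sgn hsgn)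

end Box

theorem nonneg_and_dotProduct_eq_zero_of_forall_le {q : Type*} [Fintype q]
    {lam c : q → ℝ} (hlam : 0 ≤ lam) (hmin : ∀ μ : q → ℝ, 0 ≤ μ → lam ⬝ᵥ c ≤ μ ⬝ᵥ c) :
    0 ≤ c ∧ lam ⬝ᵥ c = 0 := by
  classical
  have hc : 0 ≤ c := fun j => by
    simpa [add_dotProduct] using
      hmin (lam + Pi.single j 1) (add_nonneg hlam (Pi.single_nonneg.mpr zero_le_one))
  exact ⟨hc, le_antisymm (by simpa using hmin 0 le_rfl) (dotProduct_nonneg_of_nonneg hlam hc)⟩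

theorem mulVec_eq_zero_of_forall_transpose_mulVec_dotProduct_nonneg {n p : Type*} [Fintype n]
    [Fintype p] {A : Matrix p n ℝ} {a : n → ℝ} (h : ∀ u, 0 ≤ (Aᵀ *ᵥ u) ⬝ᵥ a) : A *ᵥ a = 0 := by
  have hneg := h (-(A *ᵥ a))
  rw [dotProduct_comm, dotProduct_transpose_mulVec, neg_dotProduct, neg_nonneg] at hneg
  exact dotProduct_self_eq_zero.mp (le_antisymm hneg (dotProduct_self_star_nonneg _))

theorem IsMinOn.nonneg_of_eq_add_mul_add_sq_mul {E : Type*} [AddCommGroup E] [Module ℝ E]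
    {S : Set E} {f : E → ℝ} {x y : E} {a c : ℝ} (hmin : IsMinOn f S x) (hS : Convex ℝ S)
    (hx : x ∈ S) (hy : y ∈ S) (hf : ∀ t : ℝ, f (x + t • (y - x)) = f x + t * a + t ^ 2 * c) :
    0 ≤ a := by
  have hpos : ∀ t ∈ Ioc (0 : ℝ) 1, 0 ≤ a + t * c := fun t ht => by
    have hle := isMinOn_iff.mp hmin _ (hS.add_smul_sub_mem hx hy ⟨ht.1.le, ht.2⟩)
    rw [hf] at hle
    exact nonneg_of_mul_nonneg_right (by linarith) ht.1
  have hlim : Tendsto (fun t : ℝ => a + t * c) (𝓝[>] 0) (𝓝 a) :=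
    ((continuous_const.add (continuous_id.mul continuous_const)).tendsto' 0 a
      (by simp)).mono_left nhdsWithin_le_nhds
  exact ge_of_tendsto hlim (eventually_of_mem (Ioc_mem_nhdsGT zero_lt_one) hpos)

namespace PenalizedMVO

section ReducedDualSet

variable {n k p q : Type*} [Fintype p] (γ : ℝ) (A : Matrix p n ℝ)

def reducedDualSet : Set ((k → ℝ) × (n → ℝ) × (q → ℝ)) :=
  {v : k → ℝ | ∀ i, |v i| ≤ γ} ×ˢ (LinearMap.range (Aᵀ.mulVecLin) : Set (n → ℝ)) ×ˢ Ici 0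

theorem convex_reducedDualSet : Convex ℝ (reducedDualSet (k := k) (n := n) (q := q) γ A) := by
  rw [reducedDualSet, setOf_forall_abs_le_eq_Icc]
  exact (convex_Icc _ _).prod ((Submodule.convex _).prod (convex_Ici 0))

theorem isClosed_reducedDualSet [Finite n] :
    IsClosed (reducedDualSet (k := k) (n := n) (q := q) γ A) := by
  rw [reducedDualSet, setOf_forall_abs_le_eq_Icc]
  exact isClosed_Icc.prod
    ((Submodule.closed_of_finiteDimensional _).prod isClosed_Ici)

theorem zero_mem_reducedDualSet (hγ : 0 ≤ γ) :
    0 ∈ reducedDualSet (k := k) (n := n) (q := q) γ A :=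
  ⟨fun _ => by simpa using hγ, zero_mem _, mem_Ici.mpr le_rfl⟩

end ReducedDualSet

variable {n k p q : Type*} [Fintype n] [Fintype k] [Fintype p] [Fintype q] [DecidableEq n]
  (yhat : n → ℝ) (V : Matrix n n ℝ) (E : Matrix k n ℝ) (γ : ℝ) (A : Matrix p n ℝ)
  (b : p → ℝ) (G : Matrix q n ℝ) (h : q → ℝ)

noncomputable def primalObjective (z : n → ℝ) : ℝ :=
  -(yhat ⬝ᵥ z) + (1 / 2) * (z ⬝ᵥ V *ᵥ z) + γ * ∑ i, |(E *ᵥ z) i|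

def dualResidual (v : k → ℝ) (η : p → ℝ) (lam : q → ℝ) : n → ℝ :=
  yhat - Eᵀ *ᵥ v - Aᵀ *ᵥ η - Gᵀ *ᵥ lam

noncomputable def dualObjective (v : k → ℝ) (η : p → ℝ) (lam : q → ℝ) : ℝ :=
  (1 / 2) * (dualResidual yhat E A G v η lam ⬝ᵥ V⁻¹ *ᵥ dualResidual yhat E A G v η lam) +
    η ⬝ᵥ b + lam ⬝ᵥ h

theorem primalObjective_add_dualObjective (hV : V.PosDef) (z : n → ℝ) (v : k → ℝ) (η : p → ℝ)
    (lam : q → ℝ) :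
    primalObjective yhat V E γ z + dualObjective yhat V E A b G h v η lam =
      (1 / 2) * ((dualResidual yhat E A G v η lam - V *ᵥ z) ⬝ᵥ
          V⁻¹ *ᵥ (dualResidual yhat E A G v η lam - V *ᵥ z)) +
        (γ * ∑ i, |(E *ᵥ z) i| - v ⬝ᵥ E *ᵥ z) + η ⬝ᵥ (b - A *ᵥ z) + lam ⬝ᵥ (h - G *ᵥ z) := by
  have hgap := hV.fenchelYoung_gap_eq z (dualResidual yhat E A G v η lam)
  have hpair : dualResidual yhat E A G v η lam ⬝ᵥ z =
      yhat ⬝ᵥ z - v ⬝ᵥ E *ᵥ z - η ⬝ᵥ A *ᵥ z - lam ⬝ᵥ G *ᵥ z := by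
    simp only [dualResidual, sub_dotProduct, transpose_mulVec_dotProduct]
  rw [primalObjective, dualObjective, dotProduct_sub, dotProduct_sub]
  linarith

theorem primalObjective_add_dualObjective_nonneg (hV : V.PosDef) {z : n → ℝ}
    (hAz : A *ᵥ z = b) (hGz : G *ᵥ z ≤ h) {v : k → ℝ} (hv : ∀ i, |v i| ≤ γ) (η : p → ℝ)
    {lam : q → ℝ} (hlam : 0 ≤ lam) :
    0 ≤ primalObjective yhat V E γ z + dualObjective yhat V E A b G h v η lam := by
  rw [primalObjective_add_dualObjective yhat V E γ A b G h hV, hAz, sub_self, dotProduct_zero]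
  have hquad := hV.inv.dotProduct_mulVec_self_nonneg (dualResidual yhat E A G v η lam - V *ᵥ z)
  have hl1 := dotProduct_le_mul_sum_abs hv (E *ᵥ z)
  have hslack := dotProduct_nonneg_of_nonneg hlam (sub_nonneg.mpr hGz)
  linarith

def reducedResidual (x : (k → ℝ) × (n → ℝ) × (q → ℝ)) : n → ℝ :=
  yhat - Eᵀ *ᵥ x.1 - x.2.1 - Gᵀ *ᵥ x.2.2

-- The dual objective with `Aᵀη` replaced by `s` and `ηᵀb` by `sᵀz₀`; unlike `η`, the variable
-- `s` is bounded on sublevel sets.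
noncomputable def reducedDual (z₀ : n → ℝ) (x : (k → ℝ) × (n → ℝ) × (q → ℝ)) : ℝ :=
  (1 / 2) * (reducedResidual yhat E G x ⬝ᵥ V⁻¹ *ᵥ reducedResidual yhat E G x) +
    x.2.1 ⬝ᵥ z₀ + x.2.2 ⬝ᵥ h

theorem continuous_reducedDual (z₀ : n → ℝ) : Continuous (reducedDual yhat V E G h z₀) := by
  unfold reducedDual reducedResidual
  fun_prop

theorem reducedDual_eq (hV : V.PosDef) (z₀ : n → ℝ) (x : (k → ℝ) × (n → ℝ) × (q → ℝ)) :
    reducedDual yhat V E G h z₀ x =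
      (1 / 2) * ((reducedResidual yhat E G x - V *ᵥ z₀) ⬝ᵥ
          V⁻¹ *ᵥ (reducedResidual yhat E G x - V *ᵥ z₀)) + x.2.2 ⬝ᵥ (h - G *ᵥ z₀) +
        (yhat ⬝ᵥ z₀ - (1 / 2) * (z₀ ⬝ᵥ V *ᵥ z₀) - x.1 ⬝ᵥ E *ᵥ z₀) := by
  have hgap := hV.fenchelYoung_gap_eq z₀ (reducedResidual yhat E G x)
  have hpair : reducedResidual yhat E G x ⬝ᵥ z₀ =
      yhat ⬝ᵥ z₀ - x.1 ⬝ᵥ E *ᵥ z₀ - x.2.1 ⬝ᵥ z₀ - x.2.2 ⬝ᵥ G *ᵥ z₀ := by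
    simp only [reducedResidual, sub_dotProduct, transpose_mulVec_dotProduct]
  rw [reducedDual, dotProduct_sub]
  linarith

theorem exists_isCompact_sublevel_reducedDual (hV : V.PosDef) {z₀ : n → ℝ}
    (hGz₀ : ∀ j, (G *ᵥ z₀) j < h j) (B : ℝ) :
    ∃ K, IsCompact K ∧
      ∀ x ∈ reducedDualSet γ A, reducedDual yhat V E G h z₀ x ≤ B → x ∈ K := by
  obtain ⟨m, hm, hmW⟩ := hV.inv.exists_pos_mul_sq_norm_le
  set C := B - yhat ⬝ᵥ z₀ + (1 / 2) * (z₀ ⬝ᵥ V *ᵥ z₀) + γ * ∑ i, |(E *ᵥ z₀) i| with hC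
  have hslack : ∀ j, 0 < (h - G *ᵥ z₀) j := fun j => sub_pos.mpr (hGz₀ j)
  -- On a sublevel set `v`, `r` and `λ` lie in compact sets, and `Φ` recovers `s` from them.
  set Φ : (k → ℝ) × (n → ℝ) × (q → ℝ) → (k → ℝ) × (n → ℝ) × (q → ℝ) :=
    fun y => (y.1, yhat - Eᵀ *ᵥ y.1 - Gᵀ *ᵥ y.2.2 - y.2.1, y.2.2)
  refine ⟨Φ '' (Icc (fun _ => -γ) (fun _ => γ) ×ˢ Metric.closedBall (V *ᵥ z₀) √(2 * C / m) ×ˢ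
      Icc 0 (fun j => C / (h - G *ᵥ z₀) j)),
    (isCompact_Icc.prod ((isCompact_closedBall _ _).prod isCompact_Icc)).image (by fun_prop),
    ?_⟩
  rintro x ⟨hv, -, hlam⟩ hB
  have hsub : (1 / 2) * ((reducedResidual yhat E G x - V *ᵥ z₀) ⬝ᵥ
        V⁻¹ *ᵥ (reducedResidual yhat E G x - V *ᵥ z₀)) + x.2.2 ⬝ᵥ (h - G *ᵥ z₀) ≤ C := by
    rw [reducedDual_eq yhat V E G h hV] at hB
    linarith [dotProduct_le_mul_sum_abs hv (E *ᵥ z₀)]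
  have hquad := hV.inv.dotProduct_mulVec_self_nonneg (reducedResidual yhat E G x - V *ᵥ z₀)
  have hlam_slack := dotProduct_nonneg_of_nonneg hlam fun j => (hslack j).le
  refine ⟨(x.1, reducedResidual yhat E G x, x.2.2), ⟨?_, ?_, hlam, fun j => ?_⟩, ?_⟩
  · rwa [← setOf_forall_abs_le_eq_Icc]
  · rw [Metric.mem_closedBall, dist_eq_norm,
      Real.le_sqrt (norm_nonneg _) (div_nonneg (by linarith) hm.le),
      le_div_iff₀ hm]
    linarith [hmW (reducedResidual yhat E G x - V *ᵥ z₀)]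
  · rw [le_div_iff₀ (hslack j)]
    calc x.2.2 j * (h - G *ᵥ z₀) j ≤ x.2.2 ⬝ᵥ (h - G *ᵥ z₀) :=
          Finset.single_le_sum (fun i _ => mul_nonneg (hlam i) (hslack i).le)
            (Finset.mem_univ j)
      _ ≤ C := by linarith
  · simp only [Φ, reducedResidual]
    ext <;> simp

theorem exists_isMinOn_reducedDual (hV : V.PosDef) (hγ : 0 ≤ γ) {z₀ : n → ℝ}
    (hGz₀ : ∀ j, (G *ᵥ z₀) j < h j) :
    ∃ x ∈ reducedDualSet γ A, IsMinOn (reducedDual yhat V E G h z₀) (reducedDualSet γ A) x := by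
  obtain ⟨K, hK, hsub⟩ :=
    exists_isCompact_sublevel_reducedDual yhat V E γ A G h hV hGz₀ (reducedDual yhat V E G h z₀ 0)
  refine (continuous_reducedDual yhat V E G h z₀).continuousOn.exists_isMinOn'
    (isClosed_reducedDualSet γ A) (zero_mem_reducedDualSet γ A hγ) ?_
  exact (hasBasis_cocompact.inf_principal _).eventually_iff.mpr
    ⟨K, hK, fun x ⟨hxK, hxS⟩ => le_of_not_ge fun hx => hxK (hsub x hxS hx)⟩

theorem reducedDual_add_smul (hV : V.PosDef) (z₀ : n → ℝ) (x w : (k → ℝ) × (n → ℝ) × (q → ℝ))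
    (t : ℝ) :
    reducedDual yhat V E G h z₀ (x + t • w) = reducedDual yhat V E G h z₀ x +
      t * (w.2.1 ⬝ᵥ (z₀ - V⁻¹ *ᵥ reducedResidual yhat E G x) +
        w.2.2 ⬝ᵥ (h - G *ᵥ V⁻¹ *ᵥ reducedResidual yhat E G x) -
        w.1 ⬝ᵥ E *ᵥ V⁻¹ *ᵥ reducedResidual yhat E G x) +
      t ^ 2 * ((1 / 2) * ((Eᵀ *ᵥ w.1 + w.2.1 + Gᵀ *ᵥ w.2.2) ⬝ᵥ
        V⁻¹ *ᵥ (Eᵀ *ᵥ w.1 + w.2.1 + Gᵀ *ᵥ w.2.2))) := by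
  set δ := Eᵀ *ᵥ w.1 + w.2.1 + Gᵀ *ᵥ w.2.2
  have hres : reducedResidual yhat E G (x + t • w) = reducedResidual yhat E G x - t • δ := by
    simp only [reducedResidual, δ, Prod.fst_add, Prod.snd_add, Prod.smul_fst, Prod.smul_snd,
      mulVec_add, mulVec_smul, smul_add]
    abel
  have hcross : δ ⬝ᵥ V⁻¹ *ᵥ reducedResidual yhat E G x =
      w.1 ⬝ᵥ E *ᵥ V⁻¹ *ᵥ reducedResidual yhat E G x +
        w.2.1 ⬝ᵥ V⁻¹ *ᵥ reducedResidual yhat E G x +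
        w.2.2 ⬝ᵥ G *ᵥ V⁻¹ *ᵥ reducedResidual yhat E G x := by
    simp only [δ, add_dotProduct, transpose_mulVec_dotProduct]
  rw [reducedDual, reducedDual, hres,
    dotProduct_mulVec_sub_smul hV.inv.transpose_eq_self, hcross]
  simp only [Prod.fst_add, Prod.snd_add, Prod.smul_fst, Prod.smul_snd, add_dotProduct,
    smul_dotProduct, smul_eq_mul, dotProduct_sub]
  ring

theorem linearization_le_of_isMinOn_reducedDual (hV : V.PosDef) {z₀ : n → ℝ}
    {x : (k → ℝ) × (n → ℝ) × (q → ℝ)}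
    (hmin : IsMinOn (reducedDual yhat V E G h z₀) (reducedDualSet γ A) x)
    (hx : x ∈ reducedDualSet γ A) {z : n → ℝ} (hz : z = V⁻¹ *ᵥ reducedResidual yhat E G x) :
    ∀ y ∈ reducedDualSet γ A, x.2.1 ⬝ᵥ (z₀ - z) + x.2.2 ⬝ᵥ (h - G *ᵥ z) - x.1 ⬝ᵥ E *ᵥ z ≤
      y.2.1 ⬝ᵥ (z₀ - z) + y.2.2 ⬝ᵥ (h - G *ᵥ z) - y.1 ⬝ᵥ E *ᵥ z := by
  intro y hy
  subst hz
  have hfirst := hmin.nonneg_of_eq_add_mul_add_sq_mul (convex_reducedDualSet γ A) hx hy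
    (reducedDual_add_smul yhat V E G h hV z₀ x (y - x))
  simp only [Prod.fst_sub, Prod.snd_sub, sub_dotProduct] at hfirst
  linarith

theorem exists_feasible_primalObjective_add_dualObjective_eq_zero (hV : V.PosDef) (hγ : 0 ≤ γ)
    (hslater : ∃ z₀ : n → ℝ, A *ᵥ z₀ = b ∧ ∀ j, (G *ᵥ z₀) j < h j) :
    ∃ z v η lam, (A *ᵥ z = b ∧ G *ᵥ z ≤ h) ∧ (∀ i, |v i| ≤ γ) ∧ 0 ≤ lam ∧
      primalObjective yhat V E γ z + dualObjective yhat V E A b G h v η lam = 0 := by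
  obtain ⟨z₀, hAz₀, hGz₀⟩ := hslater
  obtain ⟨⟨v, s, lam⟩, hx, hmin⟩ := exists_isMinOn_reducedDual yhat V E γ A G h hV hγ hGz₀
  obtain ⟨hv, hs, hlam⟩ := id hx
  set z := V⁻¹ *ᵥ reducedResidual yhat E G (v, s, lam) with hz
  have hvar := linearization_le_of_isMinOn_reducedDual yhat V E γ A G h hV hmin hx hz
  have hAz : A *ᵥ z = b := by
    have hker : A *ᵥ (z₀ - z) = 0 :=
      mulVec_eq_zero_of_forall_transpose_mulVec_dotProduct_nonneg fun u => by
        have := hvar (v, s + Aᵀ *ᵥ u, lam) ⟨hv, add_mem hs ⟨u, rfl⟩, hlam⟩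
        simp only [add_dotProduct] at this
        linarith
    rw [mulVec_sub, sub_eq_zero] at hker
    rw [← hker, hAz₀]
  obtain ⟨hGz, hslack⟩ := nonneg_and_dotProduct_eq_zero_of_forall_le hlam fun μ hμ => by
    linarith [hvar (v, s, μ) ⟨hv, hs, hμ⟩]
  have hl1 := dotProduct_eq_mul_sum_abs_of_forall_le hγ hv fun v' hv' => by
    linarith [hvar (v', s, lam) ⟨hv', hs, hlam⟩]
  obtain ⟨η, rfl⟩ := hs
  have hVz : V *ᵥ z = dualResidual yhat E A G v η lam := by
    rw [hz, mulVec_mulVec, mul_nonsing_inv V ((isUnit_iff_isUnit_det V).mp hV.isUnit),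
      one_mulVec]
    rfl
  refine ⟨z, v, η, lam, ⟨hAz, sub_nonneg.mp hGz⟩, hv, hlam, ?_⟩
  rw [primalObjective_add_dualObjective yhat V E γ A b G h hV, ← hVz, hl1, hAz, hslack]
  simp

end PenalizedMVO

/-- Strong duality for the constrained L1-penalized QP under Slater's
condition: if there exists `z₀` with `Az₀ = b` and `Gz₀ < h` componentwise, then the primal
infimum of `−ŷᵀz + ½ zᵀVz + γ‖Ez‖₁` over `{z : Az = b, Gz ≤ h}` and the dual infimum of
`½ rᵀV⁻¹r + ηᵀb + λᵀh` (with `r = ŷ − Eᵀv − Aᵀη − Gᵀλ`) over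
`{(v, η, λ) : ‖v‖_∞ ≤ γ, λ ≥ 0}` are both attained, and the primal optimal value equals the
negative of the dual optimal value. -/
theorem stmt11 (d k p q : ℕ) (yhat : Fin d → ℝ)
    (V : Matrix (Fin d) (Fin d) ℝ) (hV : V.PosDef)
    (E : Matrix (Fin k) (Fin d) ℝ) (γ : ℝ) (hγ : 0 ≤ γ)
    (A : Matrix (Fin p) (Fin d) ℝ) (b : Fin p → ℝ)
    (G : Matrix (Fin q) (Fin d) ℝ) (h : Fin q → ℝ)
    (hslater : ∃ z₀ : Fin d → ℝ, A.mulVec z₀ = b ∧ ∀ j, (G.mulVec z₀) j < h j) :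
    ∃ zstar : Fin d → ℝ, ∃ vstar : Fin k → ℝ, ∃ ηstar : Fin p → ℝ, ∃ lamstar : Fin q → ℝ,
      (A.mulVec zstar = b ∧ ∀ j, (G.mulVec zstar) j ≤ h j) ∧
      (∀ i, |vstar i| ≤ γ) ∧ (∀ j, 0 ≤ lamstar j) ∧
      (∀ z : Fin d → ℝ, A.mulVec z = b → (∀ j, (G.mulVec z) j ≤ h j) →
        -(yhat ⬝ᵥ zstar) + (1 / 2) * (zstar ⬝ᵥ V.mulVec zstar) +
            γ * ∑ i, |(E.mulVec zstar) i| ≤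
          -(yhat ⬝ᵥ z) + (1 / 2) * (z ⬝ᵥ V.mulVec z) + γ * ∑ i, |(E.mulVec z) i|) ∧
      (∀ (v : Fin k → ℝ) (η : Fin p → ℝ) (lam : Fin q → ℝ),
        (∀ i, |v i| ≤ γ) → (∀ j, 0 ≤ lam j) →
        (1 / 2) * ((yhat - Eᵀ.mulVec vstar - Aᵀ.mulVec ηstar - Gᵀ.mulVec lamstar) ⬝ᵥ
            V⁻¹.mulVec (yhat - Eᵀ.mulVec vstar - Aᵀ.mulVec ηstar - Gᵀ.mulVec lamstar)) +
            ηstar ⬝ᵥ b + lamstar ⬝ᵥ h ≤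
          (1 / 2) * ((yhat - Eᵀ.mulVec v - Aᵀ.mulVec η - Gᵀ.mulVec lam) ⬝ᵥ
            V⁻¹.mulVec (yhat - Eᵀ.mulVec v - Aᵀ.mulVec η - Gᵀ.mulVec lam)) +
            η ⬝ᵥ b + lam ⬝ᵥ h) ∧
      -(yhat ⬝ᵥ zstar) + (1 / 2) * (zstar ⬝ᵥ V.mulVec zstar) +
          γ * ∑ i, |(E.mulVec zstar) i| =
        -((1 / 2) * ((yhat - Eᵀ.mulVec vstar - Aᵀ.mulVec ηstar - Gᵀ.mulVec lamstar) ⬝ᵥ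
            V⁻¹.mulVec (yhat - Eᵀ.mulVec vstar - Aᵀ.mulVec ηstar - Gᵀ.mulVec lamstar)) +
          ηstar ⬝ᵥ b + lamstar ⬝ᵥ h) := by
  obtain ⟨zs, vs, ηs, lams, hzs, hvs, hlams, hgap⟩ :=
    PenalizedMVO.exists_feasible_primalObjective_add_dualObjective_eq_zero yhat V E γ A b G h hV
      hγ hslater
  refine ⟨zs, vs, ηs, lams, hzs, hvs, hlams, fun z hAz hGz => ?_, fun v η lam hv hlam => ?_,
    eq_neg_of_add_eq_zero_left hgap⟩
  · have hweak := PenalizedMVO.primalObjective_add_dualObjective_nonneg yhat V E γ A b G h hV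
      hAz hGz hvs ηs hlams
    show PenalizedMVO.primalObjective yhat V E γ zs ≤ PenalizedMVO.primalObjective yhat V E γ z
    linarith
  · have hweak := PenalizedMVO.primalObjective_add_dualObjective_nonneg yhat V E γ A b G h hV
      hzs.1 hzs.2 hv η hlam
    show PenalizedMVO.dualObjective yhat V E A b G h vs ηs lams ≤
      PenalizedMVO.dualObjective yhat V E A b G h v η lam
    linarith
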